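/- arXiv:2003.01740 — 3 statements merged into one kernel-verified Lean document; each statement's English description precedes it below -/
import Mathlib

section
/- There exists a unique formal power series r(t) ∈ ℚ[[t]] with zero constant term satisfying t·(4 T_0(r³, r⁹) + 6 T_1(r³, r⁹)) = r·T_1(1, r⁹) as formal power series in t (all compositions being well defined since the relevant exponents are nonnegative). Consequently q(t) := r(t)³ is the unique power series with zero constant term satisfying t = q^{1/3} T_1(1,q³)/(4T_0(q,q³)+6T_1(q,q³)), and q(t) = t³ + 15t⁶ + 279t⁹ + ⋯. -/
open scoped BigOperators
noncomputable section

abbrev WSt : Type := ℤ × ℕ × ℕ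

def cellStep (v w : WSt) : Prop :=
  w = (v.1, v.2.1 + 1, v.2.2 + 1) ∨
  (1 ≤ v.2.2 ∧ w = (v.1, v.2.1, v.2.2 - 1)) ∨
  (1 ≤ v.2.1 ∧ w = (v.1, v.2.1 - 1, v.2.2)) ∨
  (v.2.1 = 0 ∧ w = (v.1 + 1, v.2.2, 0)) ∨
  (v.2.2 = 0 ∧ w = (v.1 - 1, 0, v.2.1 + 1))

def vertStep (v w : WSt) : Prop :=
  w = (v.1, v.2.1 + 1, v.2.2 + 1) ∨
  (1 ≤ v.2.2 ∧ w = (v.1, v.2.1, v.2.2 - 1)) ∨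
  (1 ≤ v.2.1 ∧ w = (v.1, v.2.1 - 1, v.2.2)) ∨
  (v.2.1 = 0 ∧ 1 ≤ v.2.2 ∧ w = (v.1 + 1, v.2.2 - 1, 0)) ∨
  (v.2.2 = 0 ∧ w = (v.1 - 1, 0, v.2.1 + 2))

def pathCount (step : WSt → WSt → Prop) (n : ℕ) (v : WSt) : ℕ :=
  Nat.card {p : Fin (n + 1) → WSt //
    p 0 = ((0 : ℤ), 0, 0) ∧ p (Fin.last n) = v ∧
    ∀ i : Fin n, step (p i.castSucc) (p i.succ)}

/-- number of cell-centred excursions of length `n` with winding angle `2πk/3` -/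
def eCell (n : ℕ) (k : ℤ) : ℕ := pathCount cellStep n (k, 0, 0)

/-- number of vertex-centred walks of length `n` with winding angle `2πk/3` -/
def eVert (n : ℕ) (k : ℤ) : ℕ := pathCount vertStep n (k, 0, 0)

/-- The series `T_k(u,q)`. -/
def Tk (k : ℕ) (u q : ℂ) : ℂ :=
  ∑' n : ℕ, (-1 : ℂ) ^ n * ((2 * n + 1 : ℕ) : ℂ) ^ k * q ^ (n * (n + 1) / 2) *
    (u ^ (n + 1) - (-1 : ℂ) ^ k * u ^ (-(n : ℤ)))

/-- Jacobi theta function θ₁₁. -/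
def jTheta (z τ : ℂ) : ℂ :=
  ∑' n : ℤ, (-1 : ℂ) ^ n *
    Complex.exp (((2 * (n : ℂ) + 1) / 2) ^ 2 * Complex.I * (Real.pi : ℂ) * τ +
      (2 * (n : ℂ) + 1) * Complex.I * z)

/-- derivative of θ with respect to z -/
def jTheta' (z τ : ℂ) : ℂ := deriv (fun w => jTheta w τ) z

/-- The formal power series `T_k(r^a, r^b)` for a power series `r` with zero constant term:
`∑_{n≥0} (−1)^n (2n+1)^k (r^{b·n(n+1)/2+a(n+1)} − (−1)^k r^{b·n(n+1)/2−a·n})`.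
Since for `r` with zero constant term only the terms with `n ≤ m` can contribute to the
coefficient of `t^m`, the sum may be truncated. -/
def TkComp (k a b : ℕ) (r : PowerSeries ℚ) : PowerSeries ℚ :=
  PowerSeries.mk fun m =>
    ∑ n ∈ Finset.range (m + 1),
      ((-1 : ℚ) ^ n * ((2 * n + 1 : ℕ) : ℚ) ^ k) *
        (PowerSeries.coeff m (r ^ (b * (n * (n + 1) / 2) + a * (n + 1))) -
          (-1 : ℚ) ^ k * PowerSeries.coeff m (r ^ (b * (n * (n + 1) / 2) - a * n)))

/-!
With `N(r) = 4 T₀(r³, r⁹) + 6 T₁(r³, r⁹)` and `U(r) = T₁(1, r⁹)`, whose constant term is `2`,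
the equation says that `r` is a fixed point of `Φ(r) = X · N(r) / U(r)`. Modulo `X ^ m`, the
series `N(r)` and `U(r)` only depend on `r` modulo `X ^ m`, so the factor `X` makes `Φ` a
contraction for the `X`-adic topology: it has exactly one fixed point, the limit of the
Picard iterates. Modulo `X ^ 10` only the terms `n ≤ 1` of the theta series survive, and
`s = X + 5X⁴ + 68X⁷` is a fixed point of `Φ` modulo `X ^ 10`; contraction forces `r ≡ s`,
hence `r³ ≡ X³ + 15X⁶ + 279X⁹`.
-/

open PowerSeries Function

namespace PowerSeries

section XAdic

variable {R : Type*} [CommRing R]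

theorem smodEq_span_X_pow_iff {m : ℕ} {f g : R⟦X⟧} :
    f ≡ g [SMOD Ideal.span {(X : R⟦X⟧) ^ m}] ↔ ∀ j < m, coeff j f = coeff j g := by
  simp only [SModEq.sub_mem, Ideal.mem_span_singleton, X_pow_dvd_iff, map_sub, sub_eq_zero]

theorem smodEq_span_X_pow_zero (f g : R⟦X⟧) : f ≡ g [SMOD Ideal.span {(X : R⟦X⟧) ^ 0}] :=
  smodEq_span_X_pow_iff.2 fun _ hj => absurd hj (Nat.not_lt_zero _)

theorem SModEq.of_span_X_pow_le {m n : ℕ} {f g : R⟦X⟧}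
    (h : f ≡ g [SMOD Ideal.span {(X : R⟦X⟧) ^ m}]) (hnm : n ≤ m) :
    f ≡ g [SMOD Ideal.span {(X : R⟦X⟧) ^ n}] :=
  h.mono (Ideal.span_singleton_le_span_singleton.2 (pow_dvd_pow X hnm))

theorem eq_of_forall_smodEq_span_X_pow {f g : R⟦X⟧}
    (h : ∀ m, f ≡ g [SMOD Ideal.span {(X : R⟦X⟧) ^ m}]) : f = g :=
  ext fun j => smodEq_span_X_pow_iff.1 (h (j + 1)) j j.lt_succ_self

theorem coeff_pow_of_lt {r : R⟦X⟧} (hr : constantCoeff r = 0) {j e : ℕ} (h : j < e) :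
    coeff j (r ^ e) = 0 :=
  coeff_of_lt_order j ((Nat.cast_lt.2 h).trans_le (le_order_pow_of_constantCoeff_eq_zero e hr))

theorem SModEq.X_mul {m : ℕ} {f g : R⟦X⟧}
    (h : f ≡ g [SMOD Ideal.span {(X : R⟦X⟧) ^ m}]) :
    X * f ≡ X * g [SMOD Ideal.span {(X : R⟦X⟧) ^ (m + 1)}] := by
  rw [SModEq.sub_mem, Ideal.mem_span_singleton] at h ⊢
  rw [← mul_sub, pow_succ']
  exact mul_dvd_mul_left X h

theorem mk_X_pow_eq_zero_of_le {m n : ℕ} (h : m ≤ n) :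
    Ideal.Quotient.mk (Ideal.span {(X : R⟦X⟧) ^ m}) X ^ n = 0 := by
  rw [← map_pow, Ideal.Quotient.eq_zero_iff_mem, Ideal.mem_span_singleton]
  exact pow_dvd_pow X h

def IsXAdicContracting (Φ : R⟦X⟧ → R⟦X⟧) : Prop :=
  ∀ ⦃m : ℕ⦄ ⦃f g : R⟦X⟧⦄, f ≡ g [SMOD Ideal.span {(X : R⟦X⟧) ^ m}] →
    Φ f ≡ Φ g [SMOD Ideal.span {(X : R⟦X⟧) ^ (m + 1)}]

namespace IsXAdicContracting

variable {Φ : R⟦X⟧ → R⟦X⟧}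

theorem iterate_smodEq (hΦ : IsXAdicContracting Φ) (n : ℕ) (f g : R⟦X⟧) :
    Φ^[n] f ≡ Φ^[n] g [SMOD Ideal.span {(X : R⟦X⟧) ^ n}] := by
  induction n with
  | zero => exact smodEq_span_X_pow_zero _ _
  | succ n ih => simpa only [iterate_succ_apply'] using hΦ ih

theorem smodEq_of_isFixedPt (hΦ : IsXAdicContracting Φ) {r s : R⟦X⟧} (hr : IsFixedPt Φ r)
    {m : ℕ} (hs : Φ s ≡ s [SMOD Ideal.span {(X : R⟦X⟧) ^ m}]) :
    r ≡ s [SMOD Ideal.span {(X : R⟦X⟧) ^ m}] := by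
  suffices ∀ j ≤ m, r ≡ s [SMOD Ideal.span {(X : R⟦X⟧) ^ j}] from this m le_rfl
  intro j
  induction j with
  | zero => exact fun _ => smodEq_span_X_pow_zero _ _
  | succ j ih =>
    intro hj
    rw [← hr.eq]
    exact (hΦ (ih (by omega))).trans (hs.of_span_X_pow_le hj)

theorem exists_isFixedPt (hΦ : IsXAdicContracting Φ) : ∃ r, IsFixedPt Φ r := by
  -- the coefficient `j` of the Picard iterate `Φ^[n] 0` is the same for all `n > j`
  set r := mk fun j => coeff j (Φ^[j + 1] 0)
  have hr (n : ℕ) : r ≡ Φ^[n] 0 [SMOD Ideal.span {(X : R⟦X⟧) ^ n}] := by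
    refine smodEq_span_X_pow_iff.2 fun j hj => ?_
    obtain ⟨k, rfl⟩ := Nat.exists_eq_add_of_lt hj
    rw [coeff_mk, show j + k + 1 = (j + 1) + k by omega, iterate_add_apply Φ (j + 1) k]
    exact smodEq_span_X_pow_iff.1 (hΦ.iterate_smodEq (j + 1) _ _) j j.lt_succ_self
  refine ⟨r, eq_of_forall_smodEq_span_X_pow fun n => ?_⟩
  have h := hΦ (hr n)
  rw [← iterate_succ_apply' Φ] at h
  exact (h.trans (hr (n + 1)).symm).of_span_X_pow_le n.le_succ

theorem existsUnique_isFixedPt (hΦ : IsXAdicContracting Φ) : ∃! r, IsFixedPt Φ r := by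
  obtain ⟨r, hr⟩ := hΦ.exists_isFixedPt
  refine ⟨r, hr, fun s hs => eq_of_forall_smodEq_span_X_pow fun m => ?_⟩
  exact hΦ.smodEq_of_isFixedPt hs (by rw [hr.eq])

end IsXAdicContracting

end XAdic

theorem smodEq_inv {k : Type*} [Field k] {I : Ideal k⟦X⟧} {f g : k⟦X⟧}
    (hf : constantCoeff f ≠ 0) (hg : constantCoeff g ≠ 0) (h : f ≡ g [SMOD I]) :
    f⁻¹ ≡ g⁻¹ [SMOD I] :=
  calc f⁻¹ = f⁻¹ * g⁻¹ * g := by rw [mul_assoc, PowerSeries.inv_mul_cancel g hg, mul_one]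
    _ ≡ f⁻¹ * g⁻¹ * f [SMOD I] := (SModEq.refl _).mul h.symm
    _ = g⁻¹ := by rw [mul_comm f⁻¹, mul_assoc, PowerSeries.inv_mul_cancel f hf, mul_one]

end PowerSeries

section TkComp

variable {k a b : ℕ}

theorem TkComp_smodEq {m : ℕ} {f g : ℚ⟦X⟧}
    (h : f ≡ g [SMOD Ideal.span {(X : ℚ⟦X⟧) ^ m}]) :
    TkComp k a b f ≡ TkComp k a b g [SMOD Ideal.span {(X : ℚ⟦X⟧) ^ m}] := by
  refine smodEq_span_X_pow_iff.2 fun j hj => ?_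
  simp only [TkComp, coeff_mk]
  refine Finset.sum_congr rfl fun n _ => ?_
  rw [smodEq_span_X_pow_iff.1 (h.pow _) j hj, smodEq_span_X_pow_iff.1 (h.pow _) j hj]

theorem constantCoeff_TkComp_one_zero (r : ℚ⟦X⟧) : constantCoeff (TkComp 1 0 b r) = 2 := by
  rw [← coeff_zero_eq_constantCoeff_apply, TkComp, coeff_mk]
  norm_num

theorem constantCoeff_TkComp_one_zero_ne_zero (r : ℚ⟦X⟧) :
    constantCoeff (TkComp 1 0 b r) ≠ 0 := by
  rw [constantCoeff_TkComp_one_zero]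
  norm_num

theorem le_TkComp_exponent (hab : a < b) (n : ℕ) : n ≤ b * (n * (n + 1) / 2) - a * n := by
  have hn : n ≤ n * (n + 1) / 2 := (Nat.le_div_iff_mul_le two_pos).2 (by cases n <;> simp)
  refine Nat.le_sub_of_add_le ?_
  calc n + a * n = (a + 1) * n := by ring
    _ ≤ (a + 1) * (n * (n + 1) / 2) := Nat.mul_le_mul_left _ hn
    _ ≤ b * (n * (n + 1) / 2) := Nat.mul_le_mul_right _ hab

theorem TkComp_smodEq_sum {m N : ℕ} {r : ℚ⟦X⟧} (hr : constantCoeff r = 0) (hab : a < b)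
    (hN : ∀ n ≥ N, m ≤ b * (n * (n + 1) / 2) - a * n) :
    TkComp k a b r ≡
      ∑ n ∈ Finset.range N, ((-1 : ℚ) ^ n * ((2 * n + 1 : ℕ) : ℚ) ^ k) •
        (r ^ (b * (n * (n + 1) / 2) + a * (n + 1)) -
          (-1 : ℚ) ^ k • r ^ (b * (n * (n + 1) / 2) - a * n))
      [SMOD Ideal.span {(X : ℚ⟦X⟧) ^ m}] := by
  refine smodEq_span_X_pow_iff.2 fun j hj => ?_
  set F : ℕ → ℚ := fun n => ((-1 : ℚ) ^ n * ((2 * n + 1 : ℕ) : ℚ) ^ k) *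
    (coeff j (r ^ (b * (n * (n + 1) / 2) + a * (n + 1))) -
      (-1 : ℚ) ^ k * coeff j (r ^ (b * (n * (n + 1) / 2) - a * n)))
  have hF (n : ℕ) (hn : min (j + 1) N ≤ n) : F n = 0 := by
    have hlt : j < b * (n * (n + 1) / 2) - a * n := by
      rcases min_le_iff.1 hn with hn | hn
      · exact (Nat.lt_of_succ_le hn).trans_le (le_TkComp_exponent hab n)
      · exact hj.trans_le (hN n hn)
    simp only [F, coeff_pow_of_lt hr hlt, coeff_pow_of_lt hr (hlt.trans_le (by omega :
      b * (n * (n + 1) / 2) - a * n ≤ b * (n * (n + 1) / 2) + a * (n + 1))),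
      mul_zero, sub_zero]
  have hsum (M : ℕ) (hM : min (j + 1) N ≤ M) :
      ∑ n ∈ Finset.range M, F n = ∑ n ∈ Finset.range (min (j + 1) N), F n :=
    (Finset.sum_subset (Finset.range_subset_range.2 hM) fun n _ hn =>
      hF n (not_lt.1 (Finset.mem_range.not.1 hn))).symm
  rw [TkComp, coeff_mk]
  simp only [map_sum, map_smul, map_sub, smul_eq_mul]
  exact (hsum _ (min_le_left _ _)).trans (hsum _ (min_le_right _ _)).symm

theorem ten_le_TkComp_nine_exponent {a n : ℕ} (ha : a ≤ 3) (hn : 2 ≤ n) :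
    10 ≤ 9 * (n * (n + 1) / 2) - a * n := by
  have hT : n + 1 ≤ n * (n + 1) / 2 := (Nat.le_div_iff_mul_le two_pos).2 (by nlinarith)
  have han : a * n ≤ 3 * n := Nat.mul_le_mul_right n ha
  omega

theorem TkComp_nine_smodEq {r : ℚ⟦X⟧} (hr : constantCoeff r = 0) (ha : a ≤ 3) :
    TkComp k a 9 r ≡ r ^ a - (-1) ^ k - 3 ^ k * (r ^ (9 + 2 * a) - (-1) ^ k * r ^ (9 - a))
      [SMOD Ideal.span {(X : ℚ⟦X⟧) ^ 10}] := by
  convert TkComp_smodEq_sum (N := 2) hr (by omega) fun n hn =>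
    ten_le_TkComp_nine_exponent ha hn using 1
  norm_num [Finset.sum_range_succ, smul_eq_C_mul, map_ofNat]
  ring

end TkComp

theorem numerator_smodEq {r : ℚ⟦X⟧} (hr : constantCoeff r = 0) :
    4 * TkComp 0 3 9 r + 6 * TkComp 1 3 9 r ≡ 2 + 10 * r ^ 3 - 14 * r ^ 6 - 22 * r ^ 15
      [SMOD Ideal.span {(X : ℚ⟦X⟧) ^ 10}] := by
  refine (((SModEq.refl 4).mul (TkComp_nine_smodEq (k := 0) hr le_rfl)).add
    ((SModEq.refl 6).mul (TkComp_nine_smodEq (k := 1) hr le_rfl))).trans (congrArg _ ?_)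
  ring

theorem TkComp_one_zero_nine_smodEq {r : ℚ⟦X⟧} (hr : constantCoeff r = 0) :
    TkComp 1 0 9 r ≡ 2 - 6 * r ^ 9 [SMOD Ideal.span {(X : ℚ⟦X⟧) ^ 10}] := by
  convert TkComp_nine_smodEq (k := 1) hr (Nat.zero_le 3) using 1
  ring

def qSeriesMap (r : ℚ⟦X⟧) : ℚ⟦X⟧ :=
  X * (4 * TkComp 0 3 9 r + 6 * TkComp 1 3 9 r) * (TkComp 1 0 9 r)⁻¹

theorem isFixedPt_qSeriesMap_iff {r : ℚ⟦X⟧} :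
    IsFixedPt qSeriesMap r ↔
      X * (4 * TkComp 0 3 9 r + 6 * TkComp 1 3 9 r) = r * TkComp 1 0 9 r := by
  rw [IsFixedPt, qSeriesMap, eq_comm,
    eq_mul_inv_iff_mul_eq (constantCoeff_TkComp_one_zero_ne_zero r), eq_comm]

theorem constantCoeff_eq_zero_of_isFixedPt {r : ℚ⟦X⟧} (hr : IsFixedPt qSeriesMap r) :
    constantCoeff r = 0 := by
  rw [← hr.eq, qSeriesMap, map_mul, map_mul, constantCoeff_X, zero_mul, zero_mul]

theorem isXAdicContracting_qSeriesMap : IsXAdicContracting qSeriesMap := by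
  intro m f g h
  have hN := ((SModEq.refl 4).mul (TkComp_smodEq (k := 0) (a := 3) (b := 9) h)).add
    ((SModEq.refl 6).mul (TkComp_smodEq (k := 1) (a := 3) (b := 9) h))
  have hU := smodEq_inv (constantCoeff_TkComp_one_zero_ne_zero f)
    (constantCoeff_TkComp_one_zero_ne_zero g) (TkComp_smodEq (k := 1) (a := 0) (b := 9) h)
  simpa only [qSeriesMap, mul_assoc] using (hN.mul hU).X_mul

theorem truncated_equation_approx :
    X * (2 + 10 * (X + 5 * X ^ 4 + 68 * X ^ 7) ^ 3 - 14 * (X + 5 * X ^ 4 + 68 * X ^ 7) ^ 6 -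
        22 * (X + 5 * X ^ 4 + 68 * X ^ 7) ^ 15) ≡
      (X + 5 * X ^ 4 + 68 * X ^ 7) * (2 - 6 * (X + 5 * X ^ 4 + 68 * X ^ 7) ^ 9)
      [SMOD Ideal.span {(X : ℚ⟦X⟧) ^ 10}] := by
  rw [SModEq.idealQuotientMk]
  simp only [map_mul, map_add, map_sub, map_pow, map_ofNat]
  ring_nf
  simp (disch := norm_num) only [mk_X_pow_eq_zero_of_le, zero_mul, sub_zero, add_zero]

theorem cube_approx :
    (X + 5 * X ^ 4 + 68 * X ^ 7) ^ 3 ≡ X ^ 3 + 15 * X ^ 6 + 279 * X ^ 9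
      [SMOD Ideal.span {(X : ℚ⟦X⟧) ^ 10}] := by
  rw [SModEq.idealQuotientMk]
  simp only [map_mul, map_add, map_pow, map_ofNat]
  ring_nf
  simp (disch := norm_num) only [mk_X_pow_eq_zero_of_le, zero_mul, add_zero]

theorem qSeriesMap_approx :
    qSeriesMap (X + 5 * X ^ 4 + 68 * X ^ 7) ≡ X + 5 * X ^ 4 + 68 * X ^ 7
      [SMOD Ideal.span {(X : ℚ⟦X⟧) ^ 10}] := by
  set s : ℚ⟦X⟧ := X + 5 * X ^ 4 + 68 * X ^ 7
  have hs : constantCoeff s = 0 := by simp [s]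
  calc qSeriesMap s
      ≡ s * (2 - 6 * s ^ 9) * (TkComp 1 0 9 s)⁻¹ [SMOD Ideal.span {(X : ℚ⟦X⟧) ^ 10}] :=
        (((SModEq.refl X).mul (numerator_smodEq hs)).trans truncated_equation_approx).mul
          (SModEq.refl _)
    _ ≡ s * TkComp 1 0 9 s * (TkComp 1 0 9 s)⁻¹ [SMOD Ideal.span {(X : ℚ⟦X⟧) ^ 10}] :=
        ((SModEq.refl s).mul (TkComp_one_zero_nine_smodEq hs).symm).mul (SModEq.refl _)
    _ = s := by
        rw [mul_assoc, PowerSeries.mul_inv_cancel _ (constantCoeff_TkComp_one_zero_ne_zero s),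
          mul_one]

/-- there is a unique formal power series `r(t)` with zero constant term
such that `t·(4T₀(r³,r⁹) + 6T₁(r³,r⁹)) = r·T₁(1,r⁹)`; the series `q(t) = r(t)³` then equals
`t³ + 15t⁶ + 279t⁹ + ⋯`. -/
theorem unique_q_series :
    (∃! r : PowerSeries ℚ, PowerSeries.constantCoeff r = 0 ∧
      PowerSeries.X * (4 * TkComp 0 3 9 r + 6 * TkComp 1 3 9 r) = r * TkComp 1 0 9 r) ∧
    ∀ r : PowerSeries ℚ, PowerSeries.constantCoeff r = 0 →
      PowerSeries.X * (4 * TkComp 0 3 9 r + 6 * TkComp 1 3 9 r) = r * TkComp 1 0 9 r →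
      PowerSeries.coeff 3 (r ^ 3) = 1 ∧ PowerSeries.coeff 6 (r ^ 3) = 15 ∧
        PowerSeries.coeff 9 (r ^ 3) = 279 ∧
        ∀ m < 3, PowerSeries.coeff m (r ^ 3) = 0 := by
  have hΦ := isXAdicContracting_qSeriesMap
  refine ⟨?_, fun r _ hr => ?_⟩
  · obtain ⟨r, hr, huniq⟩ := hΦ.existsUnique_isFixedPt
    exact ⟨r, ⟨constantCoeff_eq_zero_of_isFixedPt hr, isFixedPt_qSeriesMap_iff.1 hr⟩,
      fun r' hr' => huniq r' (isFixedPt_qSeriesMap_iff.2 hr'.2)⟩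
  · have hcoeff := smodEq_span_X_pow_iff.1 (((hΦ.smodEq_of_isFixedPt
      (isFixedPt_qSeriesMap_iff.2 hr) qSeriesMap_approx).pow 3).trans cube_approx)
    refine ⟨?_, ?_, ?_, fun m hm => ?_⟩ <;> rw [hcoeff _ (by omega)]
    · simp [coeff_X_pow, ← map_ofNat C, coeff_C_mul]
    · simp [coeff_X_pow, ← map_ofNat C, coeff_C_mul]
    · simp [coeff_X_pow, ← map_ofNat C, coeff_C_mul]
    · interval_cases m <;> simp [coeff_X_pow, ← map_ofNat C, coeff_C_mul]
end
end

section
/- Let G(x,y) ≡ G(t,s,x,y) = ∑_{n≥0} t^n ∑_{(k,a,b)} p_{n,(k,a,b)} s^k x^a y^b, an element of ℤ[s,s^{−1},x,y][[t]]. Then G satisfies the functional equation G(x,y) = 1 + t·x·y·G(x,y) + (t/x)(G(x,y) − G(0,y)) + (t/y)(G(x,y) − G(x,0)) + t·s·G(0,x) + t·s^{−1}·y·G(y,0), where G(0,y), G(x,0), G(0,x), G(y,0) denote the indicated substitutions and (G(x,y)−G(0,y))/x, (G(x,y)−G(x,0))/y are the (well-defined) quotients in ℤ[s,s^{−1},x,y][[t]].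 -/
open scoped BigOperators
noncomputable section

/-- The ring `ℤ[s, s⁻¹]` of Laurent polynomials in the winding variable `s`. -/
abbrev LZ := LaurentPolynomial ℤ

/-- Coefficient of `t^n x^a y^b` (with `d 0 = n`, `d 1 = a`, `d 2 = b`) in the full
generating function `G(t,s,x,y)` of cell-centred Kreweras walks: `∑_k p_{n,(k,a,b)} s^k`.
Since a walk of length `n` has wedge index of absolute value at most `n`, the sum is finite. -/
def cellCoeff (d : Fin 3 →₀ ℕ) : LZ :=
  ∑ k ∈ Finset.Icc (-(d 0 : ℤ)) (d 0 : ℤ),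
    (pathCount cellStep (d 0) (k, d 1, d 2) : LZ) * LaurentPolynomial.T k

/-- `G(x,y)`, an element of `ℤ[s,s⁻¹][[t,x,y]]` (containing `ℤ[s,s⁻¹,x,y][[t]]`). -/
def cellGL : MvPowerSeries (Fin 3) LZ := fun d => cellCoeff d

/-- `G(0,y)` -/
def cellGL0y : MvPowerSeries (Fin 3) LZ := fun d => if d 1 = 0 then cellCoeff d else 0

/-- `G(x,0)` -/
def cellGLx0 : MvPowerSeries (Fin 3) LZ := fun d => if d 2 = 0 then cellCoeff d else 0

/-- `G(0,x)`: the series in `t` and `x` whose coefficient of `t^n x^a` is `∑_k p_{n,(k,0,a)} s^k`. -/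
def cellGL0x : MvPowerSeries (Fin 3) LZ := fun d =>
  if d 2 = 0 then
    ∑ k ∈ Finset.Icc (-(d 0 : ℤ)) (d 0 : ℤ),
      (pathCount cellStep (d 0) (k, 0, d 1) : LZ) * LaurentPolynomial.T k
  else 0

/-- `G(y,0)`: the series in `t` and `y` whose coefficient of `t^n y^b` is `∑_k p_{n,(k,b,0)} s^k`. -/
def cellGLy0 : MvPowerSeries (Fin 3) LZ := fun d =>
  if d 1 = 0 then
    ∑ k ∈ Finset.Icc (-(d 0 : ℤ)) (d 0 : ℤ),
      (pathCount cellStep (d 0) (k, d 2, 0) : LZ) * LaurentPolynomial.T k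
  else 0

/-!
Splitting a path of length `n + 1` at its penultimate state gives `p_{n+1,v} = ∑_{w → v} p_{n,w}`.
The predecessors of `(k, a, b)` are `(k, a-1, b-1)` (if `a, b ≥ 1`), `(k, a, b+1)`, `(k, a+1, b)`,
`(k-1, 0, a)` (if `b = 0`) and `(k+1, b-1, 0)` (if `a = 0 < b`); these produce the terms
`t x y G`, `(t/y)(G - G(x,0))`, `(t/x)(G - G(0,y))`, `t s G(0,x)` and `t s⁻¹ y G(y,0)`, so the
functional equation is the recursion read off coefficient by coefficient.
-/

open MvPowerSeries LaurentPolynomial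

section Paths

variable (step : WSt → WSt → Prop)

abbrev PathSet (n : ℕ) (v : WSt) : Type :=
  {p : Fin (n + 1) → WSt //
    p 0 = ((0 : ℤ), 0, 0) ∧ p (Fin.last n) = v ∧ ∀ i : Fin n, step (p i.castSucc) (p i.succ)}

variable {step}

def PathSet.penultimate {n : ℕ} {v : WSt} (q : PathSet step (n + 1) v) : {w // step w v} :=
  ⟨q.1 (Fin.last n).castSucc, by simpa [q.2.2.1] using q.2.2.2 (Fin.last n)⟩

def PathSet.penultimateFiberEquiv {n : ℕ} {v : WSt} (w : {w // step w v}) :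
    {q : PathSet step (n + 1) v // q.penultimate = w} ≃ PathSet step n w where
  toFun q := ⟨Fin.init q.1.1, q.1.2.1, congrArg Subtype.val q.2,
    fun i => by simpa [Fin.init] using q.1.2.2.2 i.castSucc⟩
  invFun p := ⟨⟨Fin.snoc p.1 v, by simpa using p.2.1, by simp, fun i => by
    induction i using Fin.lastCases with
    | last => simpa [p.2.2.1] using w.2
    | cast j => rw [Fin.succ_castSucc, Fin.snoc_castSucc, Fin.snoc_castSucc]; exact p.2.2.2 j⟩,
    by simp [PathSet.penultimate, p.2.2.1]⟩
  left_inv q := by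
    obtain ⟨⟨q, -, hlast, -⟩, -⟩ := q
    ext1; ext1
    simp [← hlast]
  right_inv p := by ext1; simp

def PathSet.succEquiv (n : ℕ) (v : WSt) :
    PathSet step (n + 1) v ≃ Σ w : {w // step w v}, PathSet step n w :=
  (Equiv.sigmaFiberEquiv PathSet.penultimate).symm.trans
    (Equiv.sigmaCongrRight PathSet.penultimateFiberEquiv)

instance PathSet.subsingleton_zero (v : WSt) : Subsingleton (PathSet step 0 v) :=
  ⟨fun p q => Subtype.ext <| funext fun i => by rw [Fin.fin_one_eq_zero i, p.2.1, q.2.1]⟩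

theorem pathCount_zero (v : WSt) :
    pathCount step 0 v = if v = ((0 : ℤ), 0, 0) then 1 else 0 := by
  split_ifs with hv
  · subst hv
    exact Nat.card_eq_one_iff_unique.mpr ⟨inferInstance, ⟨fun _ => _, rfl, rfl, Fin.elim0⟩⟩
  · have : IsEmpty (PathSet step 0 v) := ⟨fun p => hv (p.2.2.1.symm.trans p.2.1)⟩
    exact Nat.card_of_isEmpty

theorem PathSet.finite (finite_preds : ∀ v, Finite {w // step w v}) (n : ℕ) (v : WSt) :
    Finite (PathSet step n v) := by
  induction n generalizing v with
  | zero => infer_instance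
  | succ n ih => exact Finite.of_equiv _ (PathSet.succEquiv n v).symm

theorem pathCount_succ_eq_sum (preds : WSt → Finset WSt)
    (mem_preds : ∀ w v, w ∈ preds v ↔ step w v) (n : ℕ) (v : WSt) :
    pathCount step (n + 1) v = ∑ w ∈ preds v, pathCount step n w := by
  let (u : WSt) : Fintype {w // step w u} := Fintype.subtype (preds u) (mem_preds · u)
  have := PathSet.finite fun u => Finite.of_fintype {w // step w u}
  rw [Finset.sum_subtype (preds v) (mem_preds · v)]
  exact (Nat.card_congr (PathSet.succEquiv n v)).trans Nat.card_sigma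

end Paths

instance : DecidableRel cellStep := fun v w => by unfold cellStep; infer_instance

def cellPreds (v : WSt) : Finset WSt :=
  ({(v.1, v.2.1 - 1, v.2.2 - 1), (v.1, v.2.1, v.2.2 + 1), (v.1, v.2.1 + 1, v.2.2),
    (v.1 - 1, 0, v.2.1), (v.1 + 1, v.2.2 - 1, 0)} : Finset WSt).filter (cellStep · v)

theorem mem_cellPreds (w v : WSt) : w ∈ cellPreds v ↔ cellStep w v := by
  obtain ⟨k, a, b⟩ := v
  obtain ⟨k', a', b'⟩ := w
  rw [cellPreds, Finset.mem_filter, and_iff_right_iff_imp, cellStep]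
  simp only [Finset.mem_insert, Finset.mem_singleton, Prod.mk.injEq]
  rintro (h | h | h | h | h) <;> omega

theorem pathCount_cellStep_succ (n : ℕ) (k : ℤ) (a b : ℕ) :
    pathCount cellStep (n + 1) (k, a, b) =
      (if 1 ≤ a ∧ 1 ≤ b then pathCount cellStep n (k, a - 1, b - 1) else 0) +
      pathCount cellStep n (k, a, b + 1) + pathCount cellStep n (k, a + 1, b) +
      (if b = 0 then pathCount cellStep n (k - 1, 0, a) else 0) +
      (if a = 0 ∧ 1 ≤ b then pathCount cellStep n (k + 1, b - 1, 0) else 0) := by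
  rw [pathCount_succ_eq_sum cellPreds mem_cellPreds, cellPreds, Finset.sum_filter,
    Finset.sum_insert (by simp; omega), Finset.sum_insert (by simp; omega),
    Finset.sum_insert (by simp), Finset.sum_insert (by simp; omega), Finset.sum_singleton]
  simp only [cellStep, Prod.mk.injEq]
  grind

theorem pathCount_cellStep_eq_zero_of_lt_natAbs {n : ℕ} {k : ℤ} (h : n < k.natAbs) (a b : ℕ) :
    pathCount cellStep n (k, a, b) = 0 := by
  induction n generalizing k a b with
  | zero => simp [pathCount_zero]; omega
  | succ n ih =>
    simp [pathCount_cellStep_succ, ih (show n < k.natAbs by omega),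
      ih (show n < (k - 1).natAbs by omega), ih (show n < (k + 1).natAbs by omega)]

theorem LaurentPolynomial.coeff_T_mul {R : Type*} [Semiring R] (m k : ℤ) (f : R[T;T⁻¹]) :
    (T m * f).coeff k = f.coeff (k - m) := by
  rw [T, AddMonoidAlgebra.coeff_single_mul_apply, one_mul, neg_add_eq_sub]

def cellWindingPoly (n a b : ℕ) : LZ :=
  ∑ k ∈ Finset.Icc (-(n : ℤ)) n, (pathCount cellStep n (k, a, b) : LZ) * T k

theorem coeff_cellWindingPoly (n a b : ℕ) (k : ℤ) :
    (cellWindingPoly n a b).coeff k = pathCount cellStep n (k, a, b) := by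
  simp only [cellWindingPoly, AddMonoidAlgebra.coeff_sum, Finsupp.finsetSum_apply,
    ← map_natCast LaurentPolynomial.C, ← single_eq_C_mul_T, AddMonoidAlgebra.coeff_single,
    Finsupp.single_apply, Finset.sum_ite_eq', Finset.mem_Icc]
  split_ifs with hk
  · rfl
  · rw [pathCount_cellStep_eq_zero_of_lt_natAbs (by omega)]; simp

theorem cellWindingPoly_zero (a b : ℕ) :
    cellWindingPoly 0 a b = if a = 0 ∧ b = 0 then 1 else 0 := by
  ext k
  rw [coeff_cellWindingPoly, pathCount_zero, ← T_zero]
  split_ifs <;> simp_all [-T_zero, eq_comm]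

theorem cellWindingPoly_succ (n a b : ℕ) :
    cellWindingPoly (n + 1) a b =
      (if 1 ≤ a ∧ 1 ≤ b then cellWindingPoly n (a - 1) (b - 1) else 0) +
      cellWindingPoly n a (b + 1) + cellWindingPoly n (a + 1) b +
      (if b = 0 then T 1 * cellWindingPoly n 0 a else 0) +
      (if a = 0 ∧ 1 ≤ b then T (-1) * cellWindingPoly n (b - 1) 0 else 0) := by
  ext k
  rw [coeff_cellWindingPoly, pathCount_cellStep_succ]
  split_ifs <;>
    simp only [AddMonoidAlgebra.coeff_add, Finsupp.add_apply, coeff_T_mul, coeff_cellWindingPoly,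
      sub_neg_eq_add, Nat.cast_add, add_zero, zero_add]

namespace MvPowerSeries

variable {σ R : Type*}

theorem coeff_X_mul [Semiring R] (i : σ) (φ : MvPowerSeries σ R) (d : σ →₀ ℕ) :
    coeff d (X i * φ) = if d i = 0 then 0 else coeff (d - Finsupp.single i 1) φ := by
  rw [X_def, coeff_monomial_mul, one_mul]
  simp only [Finsupp.single_le_iff, Nat.one_le_iff_ne_zero, ite_not]

def divX [Semiring R] (i : σ) (φ : MvPowerSeries σ R) : MvPowerSeries σ R :=
  fun d => coeff (d + Finsupp.single i 1) φ

theorem coeff_divX [Semiring R] (i : σ) (φ : MvPowerSeries σ R) (d : σ →₀ ℕ) :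
    coeff d (divX i φ) = coeff (d + Finsupp.single i 1) φ := rfl

def substXZero [Semiring R] (i : σ) (φ : MvPowerSeries σ R) : MvPowerSeries σ R :=
  fun d => if d i = 0 then coeff d φ else 0

theorem X_mul_divX [Ring R] (i : σ) (φ : MvPowerSeries σ R) :
    X i * divX i φ = φ - substXZero i φ := by
  ext d
  rw [coeff_X_mul, map_sub, coeff_divX]
  change _ = _ - ite _ _ _
  split_ifs with h
  · exact (sub_self _).symm
  · rw [tsub_add_cancel_of_le (Finsupp.single_le_iff.2 (Nat.one_le_iff_ne_zero.2 h))]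
    exact (sub_zero _).symm

end MvPowerSeries

theorem cellGL0y_eq_substXZero : cellGL0y = substXZero 1 cellGL := rfl

theorem cellGLx0_eq_substXZero : cellGLx0 = substXZero 2 cellGL := rfl

theorem coeff_cellGL (d : Fin 3 →₀ ℕ) :
    coeff d cellGL = cellWindingPoly (d 0) (d 1) (d 2) := rfl

theorem coeff_cellGL0x (d : Fin 3 →₀ ℕ) :
    coeff d cellGL0x = if d 2 = 0 then cellWindingPoly (d 0) 0 (d 1) else 0 := rfl

theorem coeff_cellGLy0 (d : Fin 3 →₀ ℕ) :
    coeff d cellGLy0 = if d 1 = 0 then cellWindingPoly (d 0) (d 2) 0 else 0 := rfl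

/-- equation (2): the functional equation for `G(x,y)`.  Here `Q1` and `Q2`
are the well-defined quotients `(G(x,y) − G(0,y))/x` and `(G(x,y) − G(x,0))/y`. -/
theorem cell_functional_equation :
    ∃ Q1 Q2 : MvPowerSeries (Fin 3) LZ,
      MvPowerSeries.X 1 * Q1 = cellGL - cellGL0y ∧
      MvPowerSeries.X 2 * Q2 = cellGL - cellGLx0 ∧
      cellGL = 1 + MvPowerSeries.X 0 * MvPowerSeries.X 1 * MvPowerSeries.X 2 * cellGL +
        MvPowerSeries.X 0 * Q1 + MvPowerSeries.X 0 * Q2 +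
        MvPowerSeries.X 0 * (MvPowerSeries.C (σ := Fin 3) (R := LZ)) (LaurentPolynomial.T 1) * cellGL0x +
        MvPowerSeries.X 0 * (MvPowerSeries.C (σ := Fin 3) (R := LZ)) (LaurentPolynomial.T (-1)) *
          MvPowerSeries.X 2 * cellGLy0 := by
  refine ⟨divX 1 cellGL, divX 2 cellGL, cellGL0y_eq_substXZero ▸ X_mul_divX 1 cellGL,
    cellGLx0_eq_substXZero ▸ X_mul_divX 2 cellGL, MvPowerSeries.ext fun d => ?_⟩
  simp only [map_add, mul_assoc, coeff_X_mul, coeff_C_mul, coeff_divX, coeff_cellGL,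
    coeff_cellGL0x, coeff_cellGLy0, coeff_one, Finsupp.coe_add, Finsupp.coe_tsub, Pi.add_apply,
    Pi.sub_apply, Finsupp.single_apply, Fin.reduceEq, if_true, if_false, tsub_zero, add_zero,
    mul_ite, mul_zero, Finsupp.ext_iff, Fin.forall_fin_succ, IsEmpty.forall_iff,
    Finsupp.coe_zero, Pi.zero_apply, and_true, Fin.succ_zero_eq_one, Fin.succ_one_eq_two]
  generalize d 0 = n, d 1 = a, d 2 = b
  cases n with
  | zero => simp [cellWindingPoly_zero]
  | succ n =>
    simp only [Nat.add_one_ne_zero, false_and, if_false, add_tsub_cancel_right, zero_add]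
    rw [cellWindingPoly_succ]
    split_ifs <;> first | omega | ring
end
end

section
/- For every τ ∈ iℝ_{>0}, setting τ̂ = −1/(3τ), one has the identity e^{−πτi/3} θ'(0,3τ)/(4i θ(πτ,3τ) + 6 θ'(πτ,3τ)) = θ'(0,τ̂)/(6 θ'(π/3,τ̂)). -/
open scoped BigOperators
noncomputable section

/-
θ is Mathlib's `jacobiTheta₂` up to an exponential factor and the shift z ↦ z/π + (τ + 1)/2, so the
functional equation of `jacobiTheta₂` becomes the modular transformation
θ(z, −1/τ) = −i (−iτ)^{1/2} e^{iτz²/π} θ(τz, τ). Differentiating in z and putting 3τ for τ, the values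
θ'(0, τ̂) and θ'(π/3, τ̂) become 3τ θ'(0, 3τ) and e^{πτi/3} (2iτ θ(πτ, 3τ) + 3τ θ'(πτ, 3τ)) times the
same factor −i (−3iτ)^{1/2}; since 6 (2iτ θ + 3τ θ') = 3τ (4i θ + 6 θ'), everything but e^{πτi/3} cancels.
-/

open Complex Real

lemma jTheta_eq_exp_mul_jacobiTheta₂ (z τ : ℂ) :
    jTheta z τ = cexp (π * I * τ / 4 + I * z) * jacobiTheta₂ (z / π + τ / 2 + 1 / 2) τ := by
  rw [jTheta, jacobiTheta₂, ← tsum_mul_left]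
  refine tsum_congr fun n => ?_
  rw [jacobiTheta₂_term, ← exp_pi_mul_I, ← exp_int_mul, ← Complex.exp_add, ← Complex.exp_add]
  congr 1
  field_simp [ofReal_ne_zero.mpr pi_ne_zero]
  ring

lemma differentiableAt_jTheta (z : ℂ) {τ : ℂ} (hτ : 0 < τ.im) :
    DifferentiableAt ℂ (fun w => jTheta w τ) z := by
  simp_rw [jTheta_eq_exp_mul_jacobiTheta₂]
  exact (by fun_prop : DifferentiableAt ℂ _ z).mul
    ((differentiableAt_jacobiTheta₂_fst _ hτ).comp z (by fun_prop))

lemma jTheta_neg_one_div (z : ℂ) {τ : ℂ} (hτ : τ ≠ 0) :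
    jTheta z (-1 / τ) =
      -I * (-I * τ) ^ (1 / 2 : ℂ) * cexp (I * τ * z ^ 2 / π) * jTheta (τ * z) τ := by
  have hs : (-I * τ) ^ (1 / 2 : ℂ) ≠ 0 := by simp [cpow_eq_zero_iff, hτ]
  -- shifting by `-1` puts the argument divided by `τ` at `z / π + (-1 / τ) / 2 + 1 / 2`
  have hperiod : jacobiTheta₂ (τ * z / π + τ / 2 + 1 / 2) τ =
      jacobiTheta₂ (τ * z / π + τ / 2 - 1 / 2) τ := by
    rw [← jacobiTheta₂_add_left (τ * z / π + τ / 2 - 1 / 2)]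
    congr 1
    ring
  have harg : (τ * z / π + τ / 2 - 1 / 2) / τ = z / π + -1 / τ / 2 + 1 / 2 := by
    field_simp; ring
  rw [jTheta_eq_exp_mul_jacobiTheta₂, jTheta_eq_exp_mul_jacobiTheta₂, hperiod,
    jacobiTheta₂_functional_equation (τ * z / π + τ / 2 - 1 / 2) τ, harg]
  have hexp : cexp (π * I * (-1 / τ) / 4 + I * z) =
      -I * cexp (I * τ * z ^ 2 / π) * cexp (π * I * τ / 4 + I * (τ * z)) *
        cexp (-π * I * (τ * z / π + τ / 2 - 1 / 2) ^ 2 / τ) := by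
    rw [show -I = cexp (-(π / 2 * I)) by rw [Complex.exp_neg, exp_pi_div_two_mul_I, Complex.inv_I]]
    simp only [← Complex.exp_add]
    congr 1
    field_simp
    ring
  rw [hexp]
  field_simp

lemma jTheta'_neg_one_div (z : ℂ) {τ : ℂ} (hτ : 0 < τ.im) :
    jTheta' z (-1 / τ) = -I * (-I * τ) ^ (1 / 2 : ℂ) * cexp (I * τ * z ^ 2 / π) *
      (2 * I * τ * z / π * jTheta (τ * z) τ + τ * jTheta' (τ * z) τ) := by
  have hτ0 : τ ≠ 0 := by rintro rfl; simp at hτ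
  have hfun : (fun w => jTheta w (-1 / τ)) = fun w =>
      -I * (-I * τ) ^ (1 / 2 : ℂ) * cexp (I * τ * w ^ 2 / π) * jTheta (τ * w) τ :=
    funext fun w => jTheta_neg_one_div w hτ0
  have hexp : HasDerivAt (fun w => cexp (I * τ * w ^ 2 / π))
      (cexp (I * τ * z ^ 2 / π) * (2 * I * τ * z / π)) z := by
    have := (((hasDerivAt_pow 2 z).const_mul (I * τ)).div_const (π : ℂ)).cexp
    refine this.congr_deriv ?_
    push_cast
    ring
  have htheta : HasDerivAt (fun w => jTheta (τ * w) τ) (jTheta' (τ * z) τ * τ) z :=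
    (differentiableAt_jTheta _ hτ).hasDerivAt.comp z (by simpa using (hasDerivAt_id z).const_mul τ)
  rw [jTheta', hfun, ((hexp.const_mul _).fun_mul htheta).deriv]
  ring

/-- the modular rewriting of `t`: with `τ̂ = −1/(3τ)`,
`e^{−πτi/3} θ'(0,3τ)/(4i θ(πτ,3τ) + 6 θ'(πτ,3τ)) = θ'(0,τ̂)/(6 θ'(π/3,τ̂))`. -/
theorem t_modular_identity (y : ℝ) (hy : 0 < y) (τ : ℂ) (hτ : τ = Complex.I * y) :
    Complex.exp (-(Real.pi : ℂ) * τ * Complex.I / 3) * jTheta' 0 (3 * τ) /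
        (4 * Complex.I * jTheta (Real.pi * τ) (3 * τ) + 6 * jTheta' (Real.pi * τ) (3 * τ)) =
      jTheta' 0 (-1 / (3 * τ)) / (6 * jTheta' ((Real.pi : ℂ) / 3) (-1 / (3 * τ))) := by
  have him : 0 < (3 * τ).im := by simp [hτ, hy]
  have hτ0 : τ ≠ 0 := by rintro rfl; simp at him
  have he : cexp (I * (3 * τ) * (π / 3) ^ 2 / π) = (cexp (-π * τ * I / 3))⁻¹ := by
    rw [← Complex.exp_neg]; congr 1; field_simp
  rw [jTheta'_neg_one_div 0 him, jTheta'_neg_one_div (π / 3) him,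
    show 3 * τ * (π / 3 : ℂ) = π * τ by ring, he]
  set c := -I * (-I * (3 * τ)) ^ (1 / 2 : ℂ) * (3 * τ)
  have hc : c ≠ 0 := by simp [c, cpow_eq_zero_iff, hτ0]
  set D := 4 * I * jTheta (π * τ) (3 * τ) + 6 * jTheta' (π * τ) (3 * τ)
  calc _ = c * jTheta' 0 (3 * τ) / (c * ((cexp (-π * τ * I / 3))⁻¹ * D)) := by
        rw [mul_div_mul_left _ _ hc, div_mul_eq_div_div, div_inv_eq_mul, mul_comm]
    _ = _ := by
      congr 1
      · simp only [c, ne_eq, two_ne_zero, not_false_eq_true, zero_pow, mul_zero, zero_div,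
          Complex.exp_zero, mul_one, zero_mul, zero_add]
        ring
      · simp only [c, D]
        field_simp
        ring
end
end
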